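/- Let Λ be an admissible graph. For every phase-space point ξ^I = (p^I,q^I) ∈ Ξ^I and every q^L ∈ F^L there exists a complex number λ of modulus one, depending only on Λ and ξ^I (and not on q^L), such that v_{[Λ,q^L]} ∘ w(ξ^I) = λ · z(Λ^J_I q^I) ∘ v_{[Λ,q^L]} ∘ z(p^I) as operators H_I → H_J, where z(Λ^J_I q^I) acts on H_J and z(p^I) acts on H_I. -/

import Mathlib

open scoped BigOperators

noncomputable section

/-- The Hilbert space `H_K` of complex functions on the configurations `F^K`. -/
abbrev HS (F K : Type*) : Type _ := (K → F) → ℂ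

/-- The linear map on function spaces given by an integral kernel. -/
def kernelMap {α β : Type*} [Fintype α] (k : β → α → ℂ) : (α → ℂ) →ₗ[ℂ] (β → ℂ) where
  toFun ψ := fun b => ∑ a, k b a * ψ a
  map_add' ψ φ := by
    funext b
    simp only [Pi.add_apply, mul_add, Finset.sum_add_distrib]
  map_smul' c ψ := by
    funext b
    simp only [Pi.smul_apply, smul_eq_mul, RingHom.id_apply, Finset.mul_sum]
    exact Finset.sum_congr rfl fun _ _ => by ring

/-- The operator of multiplication by a fixed function. -/
def mulFun {α : Type*} (f : α → ℂ) : (α → ℂ) →ₗ[ℂ] (α → ℂ) where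
  toFun ψ := fun a => f a * ψ a
  map_add' ψ φ := by funext a; simp [mul_add]
  map_smul' c ψ := by funext a; simp; ring

/-- The pullback (precomposition) operator along a map of configuration spaces. -/
def compMap {α β : Type*} (σ : β → α) : (α → ℂ) →ₗ[ℂ] (β → ℂ) where
  toFun ψ := fun b => ψ (σ b)
  map_add' _ _ := rfl
  map_smul' _ _ := rfl

variable {F : Type*} [Field F] [Fintype F] [DecidableEq F]

/-- `ε` is an injective character of the additive group of `F` into the unit circle. -/
def IsCharacter (ε : F → ℂ) : Prop :=
  Function.Injective ε ∧ (∀ a, ‖ε a‖ = 1) ∧ ∀ a b, ε (a + b) = ε a * ε b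

/-- The symmetric bicharacter `χ(p,q) = Π_k ε(p_k q_k)`. -/
def chi (ε : F → ℂ) {K : Type*} [Fintype K] (p q : K → F) : ℂ := ∏ k, ε (p k * q k)

/-- The shift operator `x(q)`, `(x(q)ψ)(q₁) = ψ(q₁ - q)`. -/
def shiftOp {K : Type*} (q : K → F) : HS F K →ₗ[ℂ] HS F K :=
  compMap (fun q₁ => q₁ - q)

/-- The multiplier operator `z(p)`, `(z(p)ψ)(q₁) = χ(p,q₁)ψ(q₁)`. -/
def multOp (ε : F → ℂ) {K : Type*} [Fintype K] (p : K → F) : HS F K →ₗ[ℂ] HS F K :=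
  mulFun (chi ε p)

/-- The Weyl operator `w(ξ) = z(p)x(q)` of the phase space point `ξ = (p,q)`. -/
def weylOp (ε : F → ℂ) {K : Type*} [Fintype K] (ξ : (K → F) × (K → F)) :
    HS F K →ₗ[ℂ] HS F K :=
  multOp ε ξ.1 ∘ₗ shiftOp ξ.2

/-- The normalization constant `d^(-n/2)` (where `d = |F|`) as a complex number. -/
def rnorm (F : Type*) [Fintype F] (n : ℕ) : ℂ :=
  (((Fintype.card F : ℝ) ^ (-(n : ℝ) / 2) : ℝ) : ℂ)

/-- The Haar-normalized inner product on `H_K`: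
`⟨ψ,φ⟩ = d^(-|K|) Σ_q conj(ψ q) φ q`. -/
def hinner {K : Type*} [Fintype K] [DecidableEq K] (ψ φ : HS F K) : ℂ :=
  ((Fintype.card F : ℂ) ^ (Fintype.card K))⁻¹ *
    ∑ q : K → F, (starRingEnd ℂ) (ψ q) * φ q

/-- The delta-function basis vector located at `q`. -/
def deltaV {K : Type*} [Fintype K] [DecidableEq K] (q : K → F) : HS F K :=
  fun q' => if q' = q then 1 else 0

/-- The adjoint of an operator with respect to the Haar-normalized inner
products `hinner` on source and target. -/
def hAdj {K M : Type*} [Fintype K] [Fintype M] [DecidableEq K] [DecidableEq M]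
    (A : HS F K →ₗ[ℂ] HS F M) : HS F M →ₗ[ℂ] HS F K :=
  kernelMap (fun qK qM =>
    (Fintype.card F : ℂ) ^ (Fintype.card K) * ((Fintype.card F : ℂ) ^ (Fintype.card M))⁻¹ *
      (starRingEnd ℂ) (A (deltaV qK) qM))

variable {I J L : Type*} [Fintype I] [Fintype J] [Fintype L]
  [DecidableEq I] [DecidableEq J] [DecidableEq L]

/-- Combining configurations on `I`, `J`, `L` into one on `I ⊕ J ⊕ L`. -/
def combine (qI : I → F) (qJ : J → F) (qL : L → F) : (I ⊕ J ⊕ L) → F :=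
  Sum.elim qI (Sum.elim qJ qL)

/-- Inclusion of the input vertices. -/
def inI : I → I ⊕ J ⊕ L := Sum.inl
/-- Inclusion of the output vertices. -/
def inJ : J → I ⊕ J ⊕ L := fun j => Sum.inr (Sum.inl j)
/-- Inclusion of the syndrome vertices. -/
def inL : L → I ⊕ J ⊕ L := fun l => Sum.inr (Sum.inr l)
/-- Inclusion of the input and syndrome vertices. -/
def embIL : I ⊕ L → I ⊕ J ⊕ L := Sum.elim inI inL

/-- The `J`-rows of `Λ` applied to a full configuration (`Λ^J_{IJL} q^{IJL}`). -/
def appJ (Λ : Matrix (I ⊕ J ⊕ L) (I ⊕ J ⊕ L) F) (v : (I ⊕ J ⊕ L) → F) : J → F :=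
  fun j => Λ.mulVec v (inJ j)

/-- The `I`-rows of `Λ` applied to a full configuration (`Λ^I_{IJL} q^{IJL}`). -/
def appI (Λ : Matrix (I ⊕ J ⊕ L) (I ⊕ J ⊕ L) F) (v : (I ⊕ J ⊕ L) → F) : I → F :=
  fun i => Λ.mulVec v (inI i)

/-- The block `Λ^J_{IL}` (rows in `J`, columns in `I ∪ L`). -/
def blockJIL (Λ : Matrix (I ⊕ J ⊕ L) (I ⊕ J ⊕ L) F) : Matrix J (I ⊕ L) F :=
  fun j il => Λ (inJ j) (embIL il)

/-- A weighted graph (adjacency matrix) is admissible: it is symmetric, the block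
`Λ^J_{IL}` is invertible and the block `Λ^{IL}_{IL}` vanishes. -/
def Admissible (Λ : Matrix (I ⊕ J ⊕ L) (I ⊕ J ⊕ L) F) : Prop :=
  Λ.IsSymm ∧ (∃ B : Matrix (I ⊕ L) J F, blockJIL Λ * B = 1 ∧ B * blockJIL Λ = 1) ∧
    ∀ a b : I ⊕ L, Λ (embIL a) (embIL b) = 0

/-- `τ(Λ,·)` is a family of unimodular phases forming a one-dimensional projective
representation: `τ(q₁+q₂) = τ(q₁)τ(q₂)χ(Λq₁,q₂)`. -/
def IsTau (ε : F → ℂ) (Λ : Matrix (I ⊕ J ⊕ L) (I ⊕ J ⊕ L) F)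
    (tau : ((I ⊕ J ⊕ L) → F) → ℂ) : Prop :=
  (∀ q, ‖tau q‖ = 1) ∧
    ∀ q₁ q₂, tau (q₁ + q₂) = tau q₁ * tau q₂ * chi ε (Λ.mulVec q₁) q₂

/-- The graph code operator `v_{[Λ,q^L]} : H_I → H_J`,
`(v ψ)(q^J) = d^(-|I|/2) Σ_{q^I} τ(Λ, q^{IJL}) ψ(q^I)`. -/
def gcode (tau : ((I ⊕ J ⊕ L) → F) → ℂ) (qL : L → F) : HS F I →ₗ[ℂ] HS F J :=
  kernelMap (fun qJ qI => rnorm F (Fintype.card I) * tau (combine qI qJ qL))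

/-- The syndrome-table condition `γ_Λ(ξ^J, q^L, ξ^I) = 0`:
`p^J = Λ^J_{IJL} q^{IJL}` and `p^I = Λ^I_J q^J`. -/
def GammaZero (Λ : Matrix (I ⊕ J ⊕ L) (I ⊕ J ⊕ L) F)
    (pJ qJ : J → F) (qL : L → F) (pI qI : I → F) : Prop :=
  pJ = appJ Λ (combine qI qJ qL) ∧ pI = appI Λ (combine 0 qJ 0)

/-- The weight of a phase space vector `ξ^J = (p^J,q^J)`. -/
def wt {J : Type*} [Fintype J] (pJ qJ : J → F) : ℕ :=
  (Finset.univ.filter fun j => ¬(pJ j = 0 ∧ qJ j = 0)).card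

/-- `Λ` is associated with a `t`-error correcting code: for every set `E ⊆ J` with
at most `2t` elements, `Λ^{J∖E}_{IE} q^{IE} = 0` implies `q^I = 0` and
`Λ^I_E q^E = 0`. -/
def TCode (Λ : Matrix (I ⊕ J ⊕ L) (I ⊕ J ⊕ L) F) (t : ℕ) : Prop :=
  ∀ E : Finset J, E.card ≤ 2 * t → ∀ (qI : I → F) (qJ : J → F),
    (∀ j ∉ E, qJ j = 0) →
    (∀ j ∉ E, appJ Λ (combine qI qJ 0) j = 0) →
    qI = 0 ∧ appI Λ (combine 0 qJ 0) = 0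

/-- Tensoring with the standard (shift invariant) vector `Ω_K ≡ 1`:
the isometry `Φ_K : H_M → H_{M⊕K}`, `(Φψ)(q) = ψ(q∘inl)`. -/
def tensOmega {M K : Type*} : HS F M →ₗ[ℂ] HS F (M ⊕ K) :=
  compMap (fun q => q ∘ Sum.inl)

/-- The Fourier transform acting on the `K`-factor of `H_{M⊕K}`. -/
def fourierR (ε : F → ℂ) {M K : Type*} [Fintype K] [DecidableEq K] :
    HS F (M ⊕ K) →ₗ[ℂ] HS F (M ⊕ K) where
  toFun φ := fun q => ∑ qK' : K → F,
    rnorm F (Fintype.card K) * chi ε (q ∘ Sum.inr) qK' * φ (Sum.elim (q ∘ Sum.inl) qK')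
  map_add' φ₁ φ₂ := by
    funext q
    simp only [Pi.add_apply, mul_add, Finset.sum_add_distrib]
  map_smul' c φ := by
    funext q
    simp only [Pi.smul_apply, smul_eq_mul, RingHom.id_apply, Finset.mul_sum]
    exact Finset.sum_congr rfl fun _ _ => by ring

/-- The multiplier `z(p)` acting on the `K`-factor of `H_{M⊕K}`. -/
def zR (ε : F → ℂ) {M K : Type*} [Fintype K] (p : K → F) :
    HS F (M ⊕ K) →ₗ[ℂ] HS F (M ⊕ K) :=
  mulFun (fun q => chi ε p (q ∘ Sum.inr))

/-- The selected error `ξ^I_{[q^L]}`: the unique `ξ^I` such that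
`γ_Λ(ξ^J, q^L, ξ^I) = 0` for some `ξ^J` of weight at most `t`, if such exists,
and `(0,0)` otherwise. -/
def xiSel (Λ : Matrix (I ⊕ J ⊕ L) (I ⊕ J ⊕ L) F) (t : ℕ) (qL : L → F) :
    (I → F) × (I → F) :=
  @dite _ (∃ ξI : (I → F) × (I → F), ∃ pJ qJ : J → F,
      wt pJ qJ ≤ t ∧ GammaZero Λ pJ qJ qL ξI.1 ξI.2)
    (Classical.dec _) (fun h => h.choose) (fun _ => (0, 0))

/-! Substituting `q ↦ q + q^I` in the sum defining `v_{[Λ,q^L]} w(ξ^I)`, the cocycle law of `τ`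
splits off `τ(Λ, q^I)` times `χ(Λ q^I, q^{IJL})`. Since `Λ^{IL}_I = 0`, the vector `Λ q^I` lives
on `J` only, so this character is `χ(Λ^J_I q^I, q^J)`, i.e. the multiplier `z(Λ^J_I q^I)` on the
output; the shift of the argument of `χ(p^I, ·)` contributes the constant `χ(p^I, q^I)`. -/

section Character

variable {F : Type*} [Field F] {ε : F → ℂ}

theorem IsCharacter.map_zero (hε : IsCharacter ε) : ε 0 = 1 := by
  have hne : ε 0 ≠ 0 := norm_ne_zero_iff.1 (by rw [hε.2.1]; exact one_ne_zero)
  exact (mul_eq_left₀ hne).1 (by rw [← hε.2.2, add_zero])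

variable {K : Type*} [Fintype K]

theorem norm_chi (hε : IsCharacter ε) (p q : K → F) : ‖chi ε p q‖ = 1 := by
  rw [chi, norm_prod]
  exact Finset.prod_eq_one fun k _ => hε.2.1 _

theorem chi_add_right (hε : IsCharacter ε) (p q₁ q₂ : K → F) :
    chi ε p (q₁ + q₂) = chi ε p q₁ * chi ε p q₂ := by
  simp only [chi, ← Finset.prod_mul_distrib, Pi.add_apply, mul_add, hε.2.2]

theorem chi_zero_left (hε : IsCharacter ε) (q : K → F) : chi ε 0 q = 1 := by
  simp [chi, hε.map_zero]

theorem chi_sumElim {K' : Type*} [Fintype K'] (p q : K → F) (p' q' : K' → F) :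
    chi ε (Sum.elim p p') (Sum.elim q q') = chi ε p q * chi ε p' q' :=
  Fintype.prod_sum_type _

end Character

theorem combine_add {F I J L : Type*} [Add F] (qI qI' : I → F) (qJ qJ' : J → F)
    (qL qL' : L → F) :
    combine (qI + qI') (qJ + qJ') (qL + qL') = combine qI qJ qL + combine qI' qJ' qL' := by
  simp only [combine, Sum.elim_add_add]

section Graph

variable {F : Type*} [Field F] {I J L : Type*} [Fintype I] [Fintype J] [Fintype L]
  {Λ : Matrix (I ⊕ J ⊕ L) (I ⊕ J ⊕ L) F}

theorem mulVec_combine_input_apply (qI : I → F) (r : I ⊕ J ⊕ L) :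
    Λ.mulVec (combine qI 0 0) r = ∑ i, Λ r (inI i) * qI i := by
  simp [Matrix.mulVec, dotProduct, Fintype.sum_sum_type, combine, inI]

theorem chi_combine_output {ε : F → ℂ} (hε : IsCharacter ε) (pJ : J → F) (qI : I → F)
    (qJ : J → F) (qL : L → F) :
    chi ε (combine 0 pJ 0) (combine qI qJ qL) = chi ε pJ qJ := by
  rw [combine, combine, chi_sumElim, chi_sumElim, chi_zero_left hε, chi_zero_left hε, one_mul,
    mul_one]

variable [DecidableEq I] [DecidableEq J] [DecidableEq L]

theorem Admissible.mulVec_combine_input (hΛ : Admissible Λ) (qI : I → F) :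
    Λ.mulVec (combine qI 0 0) = combine 0 (appJ Λ (combine qI 0 0)) 0 := by
  have hIL (a : I ⊕ L) : Λ.mulVec (combine qI 0 0) (embIL a) = 0 := by
    simp only [mulVec_combine_input_apply]
    exact Finset.sum_eq_zero fun i _ => by
      rw [show Λ (embIL a) (inI i) = 0 from hΛ.2.2 a (Sum.inl i), zero_mul]
  funext r
  rcases r with i | j | l
  · exact hIL (Sum.inl i)
  · rfl
  · exact hIL (Sum.inr l)

theorem IsTau.map_combine_input_add {ε : F → ℂ} {tau : ((I ⊕ J ⊕ L) → F) → ℂ}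
    (htau : IsTau ε Λ tau) (hε : IsCharacter ε) (hΛ : Admissible Λ)
    (qI q : I → F) (qJ : J → F) (qL : L → F) :
    tau (combine (qI + q) qJ qL)
      = tau (combine qI 0 0) * tau (combine q qJ qL) * chi ε (appJ Λ (combine qI 0 0)) qJ := by
  have hsplit : combine (qI + q) qJ qL = combine qI 0 0 + combine q qJ qL := by
    rw [← combine_add, zero_add, zero_add]
  rw [hsplit, htau.2, hΛ.mulVec_combine_input, chi_combine_output hε]

end Graph

section Operators

variable {F : Type*} [Field F] {ε : F → ℂ} {K : Type*} [Fintype K]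

@[simp]
theorem multOp_apply (p : K → F) (ψ : HS F K) (q : K → F) :
    multOp ε p ψ q = chi ε p q * ψ q :=
  rfl

@[simp]
theorem weylOp_apply (p q : K → F) (ψ : HS F K) (q₁ : K → F) :
    weylOp ε (p, q) ψ q₁ = chi ε p q₁ * ψ (q₁ - q) :=
  rfl

end Operators

@[simp]
theorem gcode_apply {F I J L : Type*} [Fintype F] [Fintype I] [DecidableEq I]
    (tau : ((I ⊕ J ⊕ L) → F) → ℂ) (qL : L → F) (ψ : HS F I) (qJ : J → F) :
    gcode tau qL ψ qJ = ∑ qI, rnorm F (Fintype.card I) * tau (combine qI qJ qL) * ψ qI :=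
  rfl

theorem gcode_weyl_commutation_input_general
    {F : Type*} [Field F] [Fintype F]
    {I J L : Type*} [Fintype I] [Fintype J] [Fintype L]
    [DecidableEq I] [DecidableEq J] [DecidableEq L]
    (ε : F → ℂ) (hε : IsCharacter ε)
    (Λ : Matrix (I ⊕ J ⊕ L) (I ⊕ J ⊕ L) F) (hΛ : Admissible Λ)
    (tau : ((I ⊕ J ⊕ L) → F) → ℂ) (htau : IsTau ε Λ tau) :
    ∀ pI qI : I → F, ∃ lam : ℂ, ‖lam‖ = 1 ∧
      ∀ qL : L → F,
        gcode tau qL ∘ₗ weylOp ε (pI, qI)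
          = lam • (multOp ε (appJ Λ (combine qI 0 0)) ∘ₗ gcode tau qL ∘ₗ multOp ε pI) := by
  intro pI qI
  refine ⟨tau (combine qI 0 0) * chi ε pI qI, ?_, fun qL => ?_⟩
  · rw [norm_mul, htau.1, norm_chi hε, mul_one]
  ext ψ qJ
  simp only [LinearMap.comp_apply, LinearMap.smul_apply, Pi.smul_apply, smul_eq_mul,
    gcode_apply, weylOp_apply, multOp_apply, Finset.mul_sum]
  refine (Fintype.sum_equiv (Equiv.addLeft qI) _ _ fun q => ?_).symm
  rw [Equiv.coe_addLeft, add_sub_cancel_left, htau.map_combine_input_add hε hΛ,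
    chi_add_right hε]
  ring

/-- Lemma com-rel, part 1. For an admissible graph `Λ`, for every
phase space point `ξ^I = (p^I,q^I)` there is a unimodular `λ` (independent of `q^L`)
with `v_{[Λ,q^L]} w(ξ^I) = λ · z(Λ^J_I q^I) v_{[Λ,q^L]} z(p^I)` for all `q^L`. -/
theorem gcode_weyl_commutation_input
    {F : Type*} [Field F] [Fintype F] [DecidableEq F]
    {I J L : Type*} [Fintype I] [Fintype J] [Fintype L]
    [DecidableEq I] [DecidableEq J] [DecidableEq L]
    (ε : F → ℂ) (hε : IsCharacter ε)
    (Λ : Matrix (I ⊕ J ⊕ L) (I ⊕ J ⊕ L) F) (hΛ : Admissible Λ)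
    (tau : ((I ⊕ J ⊕ L) → F) → ℂ) (htau : IsTau ε Λ tau) :
    ∀ pI qI : I → F, ∃ lam : ℂ, ‖lam‖ = 1 ∧
      ∀ qL : L → F,
        gcode tau qL ∘ₗ weylOp ε (pI, qI)
          = lam • (multOp ε (appJ Λ (combine qI 0 0)) ∘ₗ gcode tau qL ∘ₗ multOp ε pI) :=
  gcode_weyl_commutation_input_general ε hε Λ hΛ tau htau
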